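/- arXiv:1507.02120 — 7 statements merged into one kernel-verified Lean document; each statement's English description precedes it below -/
import Mathlib

section
/- Let A be an integral domain, b an element of an integral domain extension of A that is integral over A, and B = A[b]. Then id_A(b) = μ_A(B), i.e., the minimal degree of a monic polynomial over A vanishing at b equals the minimal number of generators of A[b] as an A-module. -/
/-- `intDeg A b`: the minimal degree of a monic polynomial over `A` vanishing at `b`. -/
noncomputable def intDeg (A : Type*) {B : Type*} [CommRing A] [CommRing B] [Algebra A B]
    (b : B) : ℕ :=
  sInf {n | ∃ p : Polynomial A, p.Monic ∧ p.natDegree = n ∧ Polynomial.aeval b p = 0}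

/-- `mu A B`: the minimal number of generators of `B` as an `A`-module. -/
noncomputable def mu (A B : Type*) [CommRing A] [CommRing B] [Algebra A B] : ℕ :=
  sInf {n | ∃ s : Finset B, s.card = n ∧ Submodule.span A (s : Set B) = ⊤}

/-- For a simple integral extension `A ⊆ B = A[b]` of integral domains, the integral
degree of `b` over `A` equals the minimal number of generators of `B` as an `A`-module. -/
theorem intDeg_eq_mu_of_simple (A B : Type*) [CommRing A] [IsDomain A] [CommRing B]
    [IsDomain B] [Algebra A B] (hinj : Function.Injective (algebraMap A B))
    (b : B) (hb : IsIntegral A b) (hgen : Algebra.adjoin A ({b} : Set B) = ⊤) :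
    intDeg A b = mu A B := by
  classical
  unfold intDeg mu
  -- from a monic polynomial of degree n killing b, we get a spanning set of card ≤ n
  have key : ∀ p : Polynomial A, p.Monic → Polynomial.aeval b p = 0 →
      ∃ s : Finset B, s.card ≤ p.natDegree ∧ Submodule.span A (s : Set B) = ⊤ := by
    intro p hp hpb
    refine ⟨Finset.image (b ^ ·) (Finset.range p.natDegree), ?_, ?_⟩
    · exact (Finset.card_image_le).trans (by simp)
    · rw [Submodule.span_range_natDegree_eq_adjoin hp hpb, hgen]
      rfl
  -- nonemptiness of the intDeg set
  obtain ⟨p₀, hp₀m, hp₀b⟩ := hb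
  have hIne : {n | ∃ p : Polynomial A, p.Monic ∧ p.natDegree = n ∧ Polynomial.aeval b p = 0}.Nonempty :=
    ⟨p₀.natDegree, p₀, hp₀m, rfl, hp₀b⟩
  -- nonemptiness of the mu set
  obtain ⟨s₀, hs₀card, hs₀span⟩ := key p₀ hp₀m hp₀b
  have hMne : {n | ∃ s : Finset B, s.card = n ∧ Submodule.span A (s : Set B) = ⊤}.Nonempty :=
    ⟨s₀.card, s₀, rfl, hs₀span⟩
  apply le_antisymm
  · -- intDeg ≤ mu : Cayley–Hamilton
    obtain ⟨s, hscard, hsspan⟩ := Nat.sInf_mem hMne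
    have hbspan : Submodule.span A (Set.range ((↑) : s → B)) = ⊤ := by
      rw [Subtype.range_coe_subtype, Finset.setOf_mem, hsspan]
    set f : Module.End A B := Algebra.lmul A B b with hf
    obtain ⟨M, hM, -⟩ := Matrix.isRepresentation.toEnd_exists_mem_ideal A ((↑) : s → B)
      hbspan f ⊤ (by rw [Ideal.smul_top_eq_map, Ideal.map_top]; exact le_top)
    have haev : Polynomial.aeval f (M : Matrix s s A).charpoly = 0 := by
      rw [← hM, Polynomial.aeval_algHom_apply,
        ← map_zero (Matrix.isRepresentation.toEnd A ((↑) : s → B) hbspan)]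
      congr 1
      ext1
      rw [Polynomial.aeval_subalgebra_coe, Matrix.aeval_self_charpoly, Subalgebra.coe_zero]
    have hdeg : (M : Matrix s s A).charpoly.natDegree = s.card := by
      rw [Matrix.charpoly_natDegree_eq_dim, Fintype.card_coe]
    have hzero : Polynomial.aeval b (M : Matrix s s A).charpoly = 0 := by
      have h1 := congrArg (fun g : Module.End A B => g 1) haev
      simp only [hf, Polynomial.aeval_algHom_apply] at h1
      simpa using h1
    rw [← hscard]
    exact Nat.sInf_le ⟨(M : Matrix s s A).charpoly, Matrix.charpoly_monic _, hdeg, hzero⟩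
  · -- mu ≤ intDeg
    obtain ⟨p, hpm, hpdeg, hpb⟩ := Nat.sInf_mem hIne
    obtain ⟨s, hscard, hsspan⟩ := key p hpm hpb
    calc mu A B ≤ s.card := Nat.sInf_le ⟨s, rfl, hsspan⟩
    _ ≤ p.natDegree := hscard
    _ = _ := hpdeg
end

section
/- Let A ⊆ B be an integral extension of integral domains and b ∈ B with id_A(b) = n ≥ 2, where id_A(b) is the minimal degree of a monic polynomial over A vanishing at b. Then there exists a maximal ideal m of A such that id_{A_m}(b/1) = n. -/
open Polynomial

lemma aux_aeval_mem_span {R S : Type*} [CommRing R] [CommRing S] [Algebra R S]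
    (b : S) (m : ℕ) (r : Polynomial R) (hr : r.degree < (m : ℕ)) :
    Polynomial.aeval b r ∈ Submodule.span R (Set.range fun i : Fin m => b ^ (i : ℕ)) := by
  by_cases h0 : r = 0
  · simp [h0]
  have hnd : r.natDegree < m := (Polynomial.natDegree_lt_iff_degree_lt h0).mpr hr
  rw [Polynomial.as_sum_range' r m hnd, map_sum]
  apply Submodule.sum_mem
  intro i hi
  rw [Polynomial.aeval_monomial, ← Algebra.smul_def]
  exact Submodule.smul_mem _ _
    (Submodule.subset_span ⟨⟨i, Finset.mem_range.mp hi⟩, rfl⟩)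

lemma aux_pow_mem_span {R S : Type*} [CommRing R] [Nontrivial R] [CommRing S] [Algebra R S]
    (b : S) (m k : ℕ) (hkm : k ≤ m)
    (p : Polynomial R) (hmon : p.Monic) (hdeg : p.natDegree = k)
    (h0 : Polynomial.aeval b p = 0) :
    b ^ m ∈ Submodule.span R (Set.range fun i : Fin m => b ^ (i : ℕ)) := by
  set q : Polynomial R := X ^ (m - k) * p with hq
  have hqmon : q.Monic := (monic_X_pow _).mul hmon
  have hqdeg : q.natDegree = m := by
    rw [hq, (monic_X_pow _).natDegree_mul hmon, natDegree_X_pow, hdeg]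
    omega
  have hq0 : Polynomial.aeval b q = 0 := by rw [hq, map_mul, h0, mul_zero]
  have hdlt : (X ^ m - q).degree < (m : WithBot ℕ) := by
    have h := Polynomial.degree_sub_lt (p := (X : Polynomial R) ^ m) (q := q)
      (by rw [degree_X_pow, Polynomial.degree_eq_natDegree hqmon.ne_zero, hqdeg])
      ((monic_X_pow _).ne_zero)
      (by rw [leadingCoeff_X_pow, hqmon.leadingCoeff])
    rwa [degree_X_pow] at h
  have hbm : b ^ m = Polynomial.aeval b (X ^ m - q) := by
    rw [map_sub, aeval_X_pow, hq0, sub_zero]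
  rw [hbm]
  exact aux_aeval_mem_span b m _ hdlt

/-- If `A ⊆ B` is an integral extension of integral domains and `b ∈ B` has integral
degree `n ≥ 2`, then there is a maximal ideal `m` of `A` such that the integral degree of
`b/1` over the localization `A_m` is still `n`. -/
theorem exists_maximal_intDeg_localization_eq (A B : Type*) [CommRing A] [IsDomain A]
    [CommRing B] [IsDomain B] [Algebra A B]
    (hinj : Function.Injective (algebraMap A B)) [Algebra.IsIntegral A B]
    (b : B) (n : ℕ) (hn : 2 ≤ n) (hb : intDeg A b = n) :
    ∃ m : Ideal A, ∃ hm : m.IsMaximal,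
      haveI : m.IsPrime := hm.isPrime
      @intDeg (Localization.AtPrime m)
        (Localization (Algebra.algebraMapSubmonoid B m.primeCompl)) _ _
        (localizationAlgebra m.primeCompl B)
        (algebraMap B (Localization (Algebra.algebraMapSubmonoid B m.primeCompl)) b) = n := by
  classical
  have hne : {k | ∃ p : Polynomial A, p.Monic ∧ p.natDegree = k ∧
      Polynomial.aeval b p = 0}.Nonempty := by
    obtain ⟨p, hpm, hp0⟩ := Algebra.IsIntegral.isIntegral (R := A) b
    exact ⟨p.natDegree, p, hpm, rfl, hp0⟩
  have hnS : n ∈ {k | ∃ p : Polynomial A, p.Monic ∧ p.natDegree = k ∧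
      Polynomial.aeval b p = 0} := by
    rw [← hb]; exact Nat.sInf_mem hne
  set N : Submodule A B := Submodule.span A (Set.range fun i : Fin (n - 1) => b ^ (i : ℕ))
    with hNdef
  -- b^(n-1) ∉ N
  have hbN : b ^ (n - 1) ∉ N := by
    intro h
    rw [hNdef, Submodule.mem_span_range_iff_exists_fun] at h
    obtain ⟨c, hc⟩ := h
    set r : Polynomial A := ∑ i : Fin (n - 1), C (c i) * X ^ (i : ℕ) with hrdef
    have hrdeg : r.degree < ((n - 1 : ℕ) : WithBot ℕ) := by
      refine lt_of_le_of_lt (Polynomial.degree_sum_le _ _) ?_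
      rw [Finset.sup_lt_iff (by exact_mod_cast WithBot.bot_lt_coe (n-1))]
      intro i _
      exact lt_of_le_of_lt (Polynomial.degree_C_mul_X_pow_le _ _)
        (by exact_mod_cast i.isLt)
    set p : Polynomial A := X ^ (n - 1) - r with hpdef
    have hpm : p.Monic := Polynomial.monic_X_pow_sub hrdeg
    have hpdeg : p.natDegree = n - 1 := by
      have : p.degree = ((n - 1 : ℕ) : WithBot ℕ) := by
        rw [hpdef, Polynomial.degree_sub_eq_left_of_degree_lt
          (by rwa [degree_X_pow]), degree_X_pow]
      exact Polynomial.natDegree_eq_of_degree_eq_some this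
    have hp0 : Polynomial.aeval b p = 0 := by
      rw [hpdef, map_sub, aeval_X_pow, hrdef, map_sum, sub_eq_zero]
      rw [← hc]
      refine Finset.sum_congr rfl fun i _ => ?_
      rw [map_mul, aeval_C, aeval_X_pow, ← Algebra.smul_def]
    have : sInf {k | ∃ p : Polynomial A, p.Monic ∧ p.natDegree = k ∧
        Polynomial.aeval b p = 0} ≤ n - 1 :=
      Nat.sInf_le ⟨p, hpm, hpdeg, hp0⟩
    rw [intDeg] at hb
    omega
  -- the conductor-like ideal
  set I : Ideal A := N.comap (LinearMap.toSpanSingleton A B (b ^ (n - 1))) with hIdef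
  have hItop : I ≠ ⊤ := by
    intro h
    apply hbN
    have : (1 : A) ∈ I := h ▸ Submodule.mem_top
    simpa [hIdef] using this
  obtain ⟨m, hm, hIm⟩ := Ideal.exists_le_maximal I hItop
  refine ⟨m, hm, ?_⟩
  haveI : m.IsPrime := hm.isPrime
  set Aₘ := Localization.AtPrime m with hAₘ
  set Bₘ := Localization (Algebra.algebraMapSubmonoid B m.primeCompl) with hBₘ
  letI : Algebra Aₘ Bₘ := localizationAlgebra m.primeCompl B
  show intDeg Aₘ (algebraMap B Bₘ b) = n
  have hcomm : ∀ a : A, algebraMap Aₘ Bₘ (algebraMap A Aₘ a)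
      = algebraMap B Bₘ (algebraMap A B a) := fun a =>
    IsLocalization.map_eq (S := Aₘ) (Q := Bₘ)
      (T := Algebra.algebraMapSubmonoid B m.primeCompl)
      (show m.primeCompl ≤
          (Algebra.algebraMapSubmonoid B m.primeCompl).comap (algebraMap A B) from
        Submonoid.le_comap_map _) a
  have hle : Algebra.algebraMapSubmonoid B m.primeCompl ≤ nonZeroDivisors B := by
    rintro _ ⟨a, ha, rfl⟩
    refine mem_nonZeroDivisors_of_ne_zero fun h0 => ha ?_
    have : a = 0 := hinj (by rw [h0, map_zero])
    rw [this]; exact m.zero_mem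
  have hφinj : Function.Injective (algebraMap B Bₘ) := IsLocalization.injective Bₘ hle
  haveI : Nontrivial Bₘ :=
    ⟨⟨1, 0, fun h => one_ne_zero (hφinj (by rwa [map_one, map_zero]))⟩⟩
  -- n is achieved over Aₘ
  obtain ⟨p, hpm, hpd, hp0⟩ := hnS
  have haeval : Polynomial.aeval (algebraMap B Bₘ b) (p.map (algebraMap A Aₘ))
      = algebraMap B Bₘ (Polynomial.aeval b p) := by
    have hcompeq : (algebraMap Aₘ Bₘ).comp (algebraMap A Aₘ)
        = (algebraMap B Bₘ).comp (algebraMap A B) := RingHom.ext hcomm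
    rw [Polynomial.aeval_def, Polynomial.eval₂_map, hcompeq,
      ← Polynomial.hom_eval₂, ← Polynomial.aeval_def]
  have hmem : n ∈ {k | ∃ q : Polynomial Aₘ, q.Monic ∧ q.natDegree = k ∧
      Polynomial.aeval (algebraMap B Bₘ b) q = 0} :=
    ⟨p.map (algebraMap A Aₘ), hpm.map _, by rw [hpm.natDegree_map]; exact hpd,
      by rw [haeval, hp0, map_zero]⟩
  rw [intDeg]
  refine le_antisymm (Nat.sInf_le hmem) (le_csInf ⟨n, hmem⟩ ?_)
  rintro k ⟨q, hqm, hqd, hq0⟩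
  by_contra hcon
  push_neg at hcon
  rcases Nat.eq_zero_or_pos k with hk0 | hk1
  · rw [hk0] at hqd
    rw [hqm.natDegree_eq_zero.mp hqd, map_one] at hq0
    exact one_ne_zero hq0
  · have hkle : k ≤ n - 1 := by omega
    have hspan := aux_pow_mem_span (R := Aₘ) (algebraMap B Bₘ b) (n - 1) k hkle q hqm hqd hq0
    rw [Submodule.mem_span_range_iff_exists_fun] at hspan
    obtain ⟨c, hc⟩ := hspan
    obtain ⟨s, hs⟩ := IsLocalization.exist_integer_multiples (S := Aₘ) m.primeCompl
      Finset.univ c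
    choose a ha using fun i : Fin (n - 1) =>
      RingHom.mem_rangeS.mp (hs i (Finset.mem_univ i))
    -- each term of the sum, multiplied by s, comes from B
    have step : ∀ i : Fin (n - 1),
        algebraMap Aₘ Bₘ (algebraMap A Aₘ (s : A)) * (c i • (algebraMap B Bₘ b) ^ (i : ℕ))
          = algebraMap B Bₘ (algebraMap A B (a i) * b ^ (i : ℕ)) := by
      intro i
      rw [Algebra.smul_def, ← mul_assoc, ← map_mul, ← Algebra.smul_def (s : A) (c i),
        ← ha i, hcomm (a i), ← map_pow, ← map_mul]
    have main : algebraMap B Bₘ (algebraMap A B (s : A) * b ^ (n - 1))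
        = algebraMap B Bₘ (∑ i : Fin (n - 1), algebraMap A B (a i) * b ^ (i : ℕ)) := by
      rw [map_mul, ← hcomm (s : A), map_pow, ← hc, Finset.mul_sum, map_sum]
      exact Finset.sum_congr rfl fun i _ => step i
    have hB : algebraMap A B (s : A) * b ^ (n - 1)
        = ∑ i : Fin (n - 1), algebraMap A B (a i) * b ^ (i : ℕ) := hφinj main
    have hsI : (s : A) ∈ I := by
      rw [hIdef]
      simp only [Submodule.mem_comap, LinearMap.toSpanSingleton_apply]
      rw [Algebra.smul_def, hB]
      refine Submodule.sum_mem _ fun i _ => ?_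
      rw [← Algebra.smul_def]
      exact Submodule.smul_mem _ _ (Submodule.subset_span ⟨i, rfl⟩)
    exact s.2 (hIm hsI)
end

section
/- Let A ⊆ B and B ⊆ C be integral extensions of integral domains, with B a finitely generated A-module. Then for every α ∈ C, id_A(α) ≤ μ_A(B) · id_B(α), where id denotes the minimal degree of a monic vanishing polynomial and μ_A(B) the minimal number of A-module generators of B. -/
open Polynomial

/-- Cayley–Hamilton with a degree bound: if an `R`-module is spanned by the range of
`b : ι → M` with `ι` finite, every endomorphism satisfies a monic polynomial of degree
`Fintype.card ι`. -/
lemma exists_monic_natDegree_card_aeval_eq_zero {R M ι : Type*} [CommRing R] [Nontrivial R]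
    [AddCommGroup M] [Module R M] [Fintype ι] [DecidableEq ι] (b : ι → M)
    (hb : Submodule.span R (Set.range b) = ⊤) (f : Module.End R M) :
    ∃ p : R[X], p.Monic ∧ p.natDegree = Fintype.card ι ∧ Polynomial.aeval f p = 0 := by
  obtain ⟨A, H⟩ := Matrix.isRepresentation.toEnd_surjective R b hb f
  refine ⟨(A : Matrix ι ι R).charpoly, (A : Matrix ι ι R).charpoly_monic,
    (A : Matrix ι ι R).charpoly_natDegree_eq_dim, ?_⟩
  rw [← H, Polynomial.aeval_algHom_apply, ← map_zero (Matrix.isRepresentation.toEnd R b hb)]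
  congr 1
  ext1
  rw [Polynomial.aeval_subalgebra_coe, Matrix.aeval_self_charpoly, Subalgebra.coe_zero]

/-- For integral extensions `A ⊆ B ⊆ C` of integral domains with `B` a finite `A`-module,
`id_A(α) ≤ μ_A(B) · id_B(α)` for every `α ∈ C`. -/
theorem intDeg_le_mu_mul_intDeg (A B C : Type*) [CommRing A] [IsDomain A] [CommRing B]
    [IsDomain B] [CommRing C] [IsDomain C] [Algebra A B] [Algebra B C] [Algebra A C]
    [IsScalarTower A B C]
    (hinjAB : Function.Injective (algebraMap A B))
    (hinjBC : Function.Injective (algebraMap B C))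
    [Algebra.IsIntegral A B] [Algebra.IsIntegral B C] [Module.Finite A B]
    (α : C) :
    intDeg A α ≤ mu A B * intDeg B α := by
  classical
  -- realize `mu A B` by an actual finset
  obtain ⟨s, hs_card, hs_span⟩ :
      ∃ s : Finset B, s.card = mu A B ∧ Submodule.span A (s : Set B) = ⊤ := by
    have hne : {n | ∃ s : Finset B, s.card = n ∧ Submodule.span A (s : Set B) = ⊤}.Nonempty := by
      obtain ⟨t, ht⟩ := Module.Finite.fg_top (R := A) (M := B)
      exact ⟨t.card, t, rfl, ht⟩
    exact Nat.sInf_mem hne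
  -- realize `intDeg B α` by an actual polynomial
  obtain ⟨q, hq_monic, hq_deg, hq0⟩ :
      ∃ q : B[X], q.Monic ∧ q.natDegree = intDeg B α ∧ Polynomial.aeval α q = 0 := by
    have hne : {n | ∃ p : B[X], p.Monic ∧ p.natDegree = n ∧ Polynomial.aeval α p = 0}.Nonempty := by
      obtain ⟨p, hp, hp0⟩ := (Algebra.IsIntegral.isIntegral (R := B) α)
      exact ⟨p.natDegree, p, hp, rfl, hp0⟩
    exact Nat.sInf_mem hne
  set n := mu A B
  set d := intDeg B α with hd_def
  have hd_pos : 0 < d := by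
    rcases Nat.eq_zero_or_pos d with h | h
    · exfalso
      have : q = 1 := (Polynomial.Monic.natDegree_eq_zero hq_monic).mp (hq_deg.trans h)
      rw [this, map_one] at hq0
      exact one_ne_zero hq0
    · exact h
  -- the enumerating family
  let e : Fin n → B := fun i => (s.equivFin.symm (Fin.cast hs_card.symm i) : B)
  let g : Fin n × Fin d → C := fun ij => algebraMap B C (e ij.1) * α ^ (ij.2 : ℕ)
  set N : Submodule A C := Submodule.span A (Set.range g) with hN_def
  -- key membership lemma
  have key : ∀ (b : B) (j : ℕ), j < d → algebraMap B C b * α ^ j ∈ N := by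
    intro b j hj
    have hb : b ∈ Submodule.span A (s : Set B) := hs_span ▸ Submodule.mem_top
    induction hb using Submodule.span_induction with
    | mem x hx =>
        obtain ⟨i, hi⟩ : ∃ i : Fin n, e i = x := by
          refine ⟨Fin.cast hs_card (s.equivFin ⟨x, hx⟩), ?_⟩
          simp [e]
        exact Submodule.subset_span ⟨(i, ⟨j, hj⟩), by simp [g, hi]⟩
    | zero => simpa using N.zero_mem
    | add x y hx hy ihx ihy =>
        rw [map_add, add_mul]; exact N.add_mem ihx ihy
    | smul a x hx ih =>
        rw [Algebra.smul_def, map_mul, ← IsScalarTower.algebraMap_apply, mul_assoc,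
          ← Algebra.smul_def]
        exact N.smul_mem a ih
  -- expression for α ^ d
  have hαd : α ^ d = ∑ k ∈ Finset.range d, algebraMap B C (-(q.coeff k)) * α ^ k := by
    have hsum := Polynomial.aeval_eq_sum_range (p := q) α
    have hcd : q.coeff d = 1 := by rw [← hq_deg]; exact hq_monic.coeff_natDegree
    rw [hq0, hq_deg, Finset.sum_range_succ, hcd, one_smul] at hsum
    have h2 : α ^ d = -∑ k ∈ Finset.range d, q.coeff k • α ^ k :=
      eq_neg_of_add_eq_zero_right hsum.symm
    rw [h2, ← Finset.sum_neg_distrib]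
    refine Finset.sum_congr rfl fun k _ => ?_
    rw [map_neg, neg_mul, ← Algebra.smul_def]
  -- N is stable under multiplication by α
  have hmul : ∀ x ∈ N, α * x ∈ N := by
    intro x hx
    induction hx using Submodule.span_induction with
    | mem y hy =>
        obtain ⟨⟨i, j⟩, rfl⟩ := hy
        show α * (algebraMap B C (e i) * α ^ (j : ℕ)) ∈ N
        rw [mul_left_comm, ← pow_succ']
        rcases lt_or_eq_of_le (Nat.succ_le_of_lt j.2) with h | h
        · exact key _ _ h
        · rw [Nat.succ_eq_add_one] at h
          rw [h, hαd, Finset.mul_sum]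
          refine Submodule.sum_mem _ fun k hk => ?_
          rw [mul_left_comm, ← mul_assoc, ← map_mul]
          exact key _ _ (Finset.mem_range.mp hk)
    | zero => simpa using N.zero_mem
    | add x y hx hy ihx ihy => rw [mul_add]; exact N.add_mem ihx ihy
    | smul a x hx ih =>
        rw [Algebra.mul_smul_comm]
        exact N.smul_mem a ih
  have hmul' : ∀ x ∈ N, α • x ∈ N := fun x hx => by
    rw [smul_eq_mul]; exact hmul x hx
  have h1 : (1 : C) ∈ N := by
    have := key 1 0 hd_pos
    simpa using this
  -- the subalgebra of elements preserving N
  let A' : Subalgebra A C :=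
    { carrier := { x | ∀ m ∈ N, x • m ∈ N }
      mul_mem' := fun {a b} ha hb m hm => smul_smul a b m ▸ ha _ (hb _ hm)
      one_mem' := fun m hm => (one_smul C m).symm ▸ hm
      add_mem' := fun {a b} ha hb m hm => (add_smul a b m).symm ▸ N.add_mem (ha _ hm) (hb _ hm)
      zero_mem' := fun m _hm => (zero_smul C m).symm ▸ N.zero_mem
      algebraMap_mem' := fun r m hm => (algebraMap_smul C r m).symm ▸ N.smul_mem r hm }
  let F : A' →ₐ[A] Module.End A N :=
    AlgHom.ofLinearMap
      { toFun := fun x => (DistribMulAction.toLinearMap A C (x : C)).restrict x.prop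
        map_add' := by
          intros x y; ext m; show ((x + y : A') : C) • (m : C) = (x : C) • (m : C) + (y : C) • (m : C); simp; ring
        map_smul' := by
          intros r x; ext m; show ((r • x : A') : C) • (m : C) = r • ((x : C) • (m : C)); simp [smul_assoc] }
      (by ext m; show ((1 : A') : C) • (m : C) = (m : C); simp)
      (by intros x y; ext m;
          show ((x * y : A') : C) • (m : C) = ((x : C) • ((y : C) • (m : C)));
          simp [mul_smul, mul_assoc])
  have hFinj : Function.Injective F := by
    show Function.Injective F.toLinearMap
    rw [injective_iff_map_eq_zero]
    intro x hx
    have hx1 : (x : C) • (1 : C) = 0 := congr_arg Subtype.val (LinearMap.congr_fun hx ⟨1, h1⟩)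
    rw [smul_eq_mul, mul_one] at hx1
    exact Subtype.ext hx1
  -- the generating family of N
  let b' : Fin n × Fin d → N := fun ij => ⟨g ij, Submodule.subset_span (Set.mem_range_self ij)⟩
  have hb' : Submodule.span A (Set.range b') = ⊤ := by
    apply Submodule.map_injective_of_injective N.injective_subtype
    rw [Submodule.map_span, Submodule.map_top, Submodule.range_subtype]
    congr 1
    ext x
    constructor
    · rintro ⟨_, ⟨ij, rfl⟩, rfl⟩; exact ⟨ij, rfl⟩
    · rintro ⟨ij, rfl⟩; exact ⟨b' ij, ⟨ij, rfl⟩, rfl⟩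
  -- apply Cayley–Hamilton
  obtain ⟨p, hp_monic, hp_deg, hp0⟩ :=
    exists_monic_natDegree_card_aeval_eq_zero (R := A) b' hb' (F ⟨α, hmul'⟩)
  have hp0' : Polynomial.aeval α p = 0 := by
    rw [Polynomial.aeval_algHom_apply] at hp0
    have := hFinj (hp0.trans (map_zero F).symm)
    have := congr_arg (A'.val) this
    rw [← Polynomial.aeval_algHom_apply, map_zero] at this
    simpa using this
  calc intDeg A α ≤ p.natDegree := Nat.sInf_le ⟨p, hp_monic, rfl, hp0'⟩
    _ = n * d := by rw [hp_deg]; simp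
end

section
/- Let K ⊆ L be a finite field extension and K_s the separable closure of K in L. Then d_K(L) = [K_s : K] · d_{K_s}(L), where d_F(E) denotes the supremum of degrees of minimal polynomials of elements of E over F. -/
open IntermediateField Polynomial Module

/-- Mixed primitive element theorem over an infinite field: `F⟮α, β⟯` is simple when `α` is
integral and `β` is separable over `F`. -/
theorem primitive_element_inf_aux_mixed (F E : Type*) [Field F] [Field E] [Algebra F E]
    [Infinite F] (α β : E) (hα : IsIntegral F α) (hβsep : IsSeparable F β) :
    ∃ γ : E, F⟮α, β⟯ = F⟮γ⟯ := by
  classical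
  have hβ : IsIntegral F β := hβsep.isIntegral
  let f := minpoly F α
  let g := minpoly F β
  let ιFE := algebraMap F E
  let ιEE' := algebraMap E (SplittingField (g.map ιFE))
  obtain ⟨c, hc⟩ := Field.primitive_element_inf_aux_exists_c (ιEE'.comp ιFE) (ιEE' α) (ιEE' β) f g
  let γ := α + c • β
  suffices β_in_Fγ : β ∈ F⟮γ⟯ by
    use γ
    apply le_antisymm
    · rw [adjoin_le_iff]
      have α_in_Fγ : α ∈ F⟮γ⟯ := by
        rw [← add_sub_cancel_right α (c • β)]
        exact F⟮γ⟯.sub_mem (mem_adjoin_simple_self F γ) (F⟮γ⟯.toSubalgebra.smul_mem β_in_Fγ c)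
      rintro x (rfl | rfl) <;> assumption
    · rw [adjoin_simple_le_iff]
      have α_in_Fαβ : α ∈ F⟮α, β⟯ := subset_adjoin F {α, β} (Set.mem_insert α {β})
      have β_in_Fαβ : β ∈ F⟮α, β⟯ := subset_adjoin F {α, β} (Set.mem_insert_of_mem α rfl)
      exact F⟮α, β⟯.add_mem α_in_Fαβ (F⟮α, β⟯.smul_mem β_in_Fαβ)
  classical
  let p := EuclideanDomain.gcd ((f.map (algebraMap F F⟮γ⟯)).comp
    (C (AdjoinSimple.gen F γ) - (C ↑c : F⟮γ⟯[X]) * X)) (g.map (algebraMap F F⟮γ⟯))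
  let h := EuclideanDomain.gcd ((f.map ιFE).comp (C γ - C (ιFE c) * X)) (g.map ιFE)
  have map_g_ne_zero : g.map ιFE ≠ 0 := map_ne_zero (minpoly.ne_zero hβ)
  have h_ne_zero : h ≠ 0 :=
    mt EuclideanDomain.gcd_eq_zero_iff.mp (not_and.mpr fun _ => map_g_ne_zero)
  suffices p_linear : p.map (algebraMap F⟮γ⟯ E) = C h.leadingCoeff * (X - C β) by
    have finale : β = algebraMap F⟮γ⟯ E (-p.coeff 0 / p.coeff 1) := by
      rw [map_div₀, RingHom.map_neg, ← coeff_map, ← coeff_map, p_linear]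
      simp [mul_sub, coeff_C, mul_div_cancel_left₀ β (mt leadingCoeff_eq_zero.mp h_ne_zero),
        -map_add]
    rw [finale]
    exact Subtype.mem (-p.coeff 0 / p.coeff 1)
  have h_sep : h.Separable := separable_gcd_right _ (.map hβsep)
  have h_root : h.eval β = 0 := by
    apply eval_gcd_eq_zero
    · rw [eval_comp, eval_sub, eval_mul, eval_C, eval_C, eval_X, eval_map, ← aeval_def, ←
        Algebra.smul_def, add_sub_cancel_right, minpoly.aeval]
    · rw [eval_map, ← aeval_def, minpoly.aeval]
  have h_splits : Splits (h.map ιEE') := by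
    rw [← Polynomial.gcd_map]
    exact (SplittingField.splits _).of_dvd (map_ne_zero map_g_ne_zero)
      (EuclideanDomain.gcd_dvd_right _ _)
  have h_roots : ∀ x ∈ (h.map ιEE').roots, x = ιEE' β := by
    intro x hx
    rw [mem_roots_map h_ne_zero] at hx
    specialize hc (ιEE' γ - ιEE' (ιFE c) * x) (by
      have f_root := root_left_of_root_gcd hx
      rw [eval₂_comp, eval₂_sub, eval₂_mul, eval₂_C, eval₂_C, eval₂_X, eval₂_map] at f_root
      exact (mem_roots_map (minpoly.ne_zero hα)).mpr f_root)
    specialize hc x (by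
      rw [mem_roots_map (minpoly.ne_zero hβ), ← eval₂_map]
      exact root_right_of_root_gcd hx)
    by_contra a
    apply hc
    apply (div_eq_iff (sub_ne_zero.mpr a)).mpr
    simp only [γ, Algebra.smul_def, RingHom.map_add, RingHom.map_mul, RingHom.comp_apply]
    ring
  rw [← eq_X_sub_C_of_separable_of_root_eq h_sep h_root h_splits h_roots]
  trans EuclideanDomain.gcd (?_ : E[X]) (?_ : E[X])
  · dsimp only [γ]
    convert (gcd_map (algebraMap F⟮γ⟯ E)).symm
  · simp only [map_comp, Polynomial.map_map, ← IsScalarTower.algebraMap_eq, Polynomial.map_sub,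
      map_C, AdjoinSimple.algebraMap_gen, map_add, Polynomial.map_mul, map_X]
    congr

/-- Mixed primitive element theorem: `F⟮α, β⟯` is simple when `α` is integral and `β` is
separable over `F`. -/
theorem primitive_element_mixed (F E : Type*) [Field F] [Field E] [Algebra F E]
    (α β : E) (hα : IsIntegral F α) (hβsep : IsSeparable F β) :
    ∃ γ : E, F⟮α, β⟯ = F⟮γ⟯ := by
  rcases finite_or_infinite F with hF | hF
  · have hβ : IsIntegral F β := hβsep.isIntegral
    haveI : FiniteDimensional F F⟮α, β⟯ := by
      apply IntermediateField.finiteDimensional_adjoin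
      rintro x (rfl | rfl) <;> assumption
    obtain ⟨δ, hδ⟩ := Field.exists_primitive_element_of_finite_bot F F⟮α, β⟯
    exact ⟨δ, by simpa only [lift_adjoin_simple, lift_top] using (congr_arg lift hδ).symm⟩
  · exact primitive_element_inf_aux_mixed F E α β hα hβsep


/-- `fieldDeg K L`: the supremum of the degrees of minimal polynomials of elements of
`L` over `K`. -/
noncomputable def fieldDeg (K L : Type*) [Field K] [Field L] [Algebra K L] : ℕ :=
  ⨆ α : L, (minpoly K α).natDegree

theorem fieldDeg_exists_max (K L : Type*) [Field K] [Field L] [Algebra K L]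
    [FiniteDimensional K L] : ∃ γ : L, fieldDeg K L = (minpoly K γ).natDegree := by
  have hbdd : BddAbove (Set.range fun α : L => (minpoly K α).natDegree) :=
    ⟨Module.finrank K L, by rintro _ ⟨α, rfl⟩; exact minpoly.natDegree_le α⟩
  obtain ⟨γ, hγ⟩ := Nat.sSup_mem (Set.range_nonempty _) hbdd
  exact ⟨γ, hγ.symm⟩

/-- For a finite field extension `K ⊆ L` with separable closure `K_s` of `K` in `L`,
`d_K(L) = [K_s : K] · d_{K_s}(L)`. -/
theorem fieldDeg_eq_sepDegree_mul (K L : Type*) [Field K] [Field L] [Algebra K L]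
    [FiniteDimensional K L] :
    fieldDeg K L =
      Module.finrank K (separableClosure K L) * fieldDeg (separableClosure K L) L := by
  set Ks := separableClosure K L with hKsdef
  haveI : FiniteDimensional Ks L := FiniteDimensional.right K Ks L
  have hbK : BddAbove (Set.range fun α : L => (minpoly K α).natDegree) :=
    ⟨Module.finrank K L, by rintro _ ⟨α, rfl⟩; exact minpoly.natDegree_le α⟩
  have hbKs : BddAbove (Set.range fun α : L => (minpoly Ks α).natDegree) :=
    ⟨Module.finrank Ks L, by rintro _ ⟨α, rfl⟩; exact minpoly.natDegree_le α⟩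
  have key : ∀ x : L, Module.finrank K (IntermediateField.restrictScalars K Ks⟮x⟯) =
      Module.finrank K Ks * (minpoly Ks x).natDegree := by
    intro x
    rw [← IntermediateField.adjoin.finrank (IsIntegral.of_finite Ks x)]
    exact (Module.finrank_mul_finrank K Ks Ks⟮x⟯).symm
  apply le_antisymm
  · refine ciSup_le fun α => ?_
    have hα : IsIntegral K α := IsIntegral.of_finite K α
    have h1 : K⟮α⟯ ≤ IntermediateField.restrictScalars K Ks⟮α⟯ := by
      rw [adjoin_simple_le_iff]
      exact mem_adjoin_simple_self Ks α
    calc (minpoly K α).natDegree = Module.finrank K K⟮α⟯ :=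
        (IntermediateField.adjoin.finrank hα).symm
      _ ≤ Module.finrank K (IntermediateField.restrictScalars K Ks⟮α⟯) :=
        LinearMap.finrank_le_finrank_of_injective
          (f := (IntermediateField.inclusion h1).toLinearMap)
          (fun a b hab => (IntermediateField.inclusion h1).toRingHom.injective hab)
      _ = Module.finrank K Ks * (minpoly Ks α).natDegree := key α
      _ ≤ Module.finrank K Ks * fieldDeg Ks L :=
        Nat.mul_le_mul_left _ (le_ciSup hbKs α)
  · obtain ⟨γ, hγ⟩ := fieldDeg_exists_max Ks L
    haveI : Algebra.IsSeparable K Ks := separableClosure.isSeparable K L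
    obtain ⟨β0, hβ0⟩ := Field.exists_primitive_element K Ks
    have hβKs : K⟮(β0 : L)⟯ = Ks := by
      simpa only [lift_adjoin_simple, lift_top] using congr_arg IntermediateField.lift hβ0
    have hβsep : IsSeparable K (β0 : L) := by
      show (minpoly K ((algebraMap Ks L) β0)).Separable
      rw [minpoly.algebraMap_eq (algebraMap Ks L).injective]
      exact Algebra.IsSeparable.isSeparable K β0
    obtain ⟨α, hαeq⟩ := primitive_element_mixed K L γ (β0 : L)
      (IsIntegral.of_finite K γ) hβsep
    have hrs : IntermediateField.restrictScalars K Ks⟮γ⟯ = K⟮α⟯ := by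
      rw [restrictScalars_adjoin_eq_sup, ← hβKs, ← hαeq, ← adjoin_union]
      show adjoin K ({(β0 : L)} ∪ {γ}) = adjoin K {γ, (β0 : L)}
      rw [Set.union_comm, Set.singleton_union]
    have hfin : Module.finrank K Ks * (minpoly Ks γ).natDegree = (minpoly K α).natDegree := by
      rw [← key γ, hrs, IntermediateField.adjoin.finrank (IsIntegral.of_finite K α)]
    rw [hγ, hfin]
    exact le_ciSup hbK α
end

section
/- Let K ⊆ L ⊆ M be algebraic field extensions. Then for every α ∈ M, the degree of the minimal polynomial of α over K is at most d_K(L) times the degree of the minimal polynomial of α over L, where d_K(L) = sup over β ∈ L of the degree of the minimal polynomial of β over K (assumed finite). -/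
open Polynomial IntermediateField Module

/-- Mixed primitive element theorem, infinite base field case: `F⟮α, β⟯` is simple
when `α` is integral and `β` is separable over `F`. -/
theorem my_pe_inf_aux {F : Type*} [Field F] [Infinite F] {E : Type*} [Field E] [Algebra F E]
    (α β : E) (hα : IsIntegral F α) (hβsep : IsSeparable F β) : ∃ γ : E, F⟮α, β⟯ = F⟮γ⟯ := by
  classical
  have hβ : IsIntegral F β := hβsep.isIntegral
  let f := minpoly F α
  let g := minpoly F β
  let ιFE := algebraMap F E
  let ιEE' := algebraMap E (SplittingField (g.map ιFE))
  obtain ⟨c, hc⟩ := Field.primitive_element_inf_aux_exists_c (ιEE'.comp ιFE) (ιEE' α) (ιEE' β) f g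
  let γ := α + c • β
  suffices β_in_Fγ : β ∈ F⟮γ⟯ by
    use γ
    apply le_antisymm
    · rw [adjoin_le_iff]
      have α_in_Fγ : α ∈ F⟮γ⟯ := by
        rw [← add_sub_cancel_right α (c • β)]
        exact F⟮γ⟯.sub_mem (mem_adjoin_simple_self F γ) (F⟮γ⟯.toSubalgebra.smul_mem β_in_Fγ c)
      rintro x (rfl | rfl) <;> assumption
    · rw [adjoin_simple_le_iff]
      have α_in_Fαβ : α ∈ F⟮α, β⟯ := subset_adjoin F {α, β} (Set.mem_insert α {β})
      have β_in_Fαβ : β ∈ F⟮α, β⟯ := subset_adjoin F {α, β} (Set.mem_insert_of_mem α rfl)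
      exact F⟮α, β⟯.add_mem α_in_Fαβ (F⟮α, β⟯.smul_mem β_in_Fαβ)
  classical
  let p := EuclideanDomain.gcd ((f.map (algebraMap F F⟮γ⟯)).comp
    (C (AdjoinSimple.gen F γ) - (C ↑c : F⟮γ⟯[X]) * X)) (g.map (algebraMap F F⟮γ⟯))
  let h := EuclideanDomain.gcd ((f.map ιFE).comp (C γ - C (ιFE c) * X)) (g.map ιFE)
  have map_g_ne_zero : g.map ιFE ≠ 0 := map_ne_zero (minpoly.ne_zero hβ)
  have h_ne_zero : h ≠ 0 :=
    mt EuclideanDomain.gcd_eq_zero_iff.mp (not_and.mpr fun _ => map_g_ne_zero)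
  suffices p_linear : p.map (algebraMap F⟮γ⟯ E) = C h.leadingCoeff * (X - C β) by
    have finale : β = algebraMap F⟮γ⟯ E (-p.coeff 0 / p.coeff 1) := by
      rw [map_div₀, RingHom.map_neg, ← coeff_map, ← coeff_map, p_linear]
      simp [mul_sub, coeff_C, mul_div_cancel_left₀ β (mt leadingCoeff_eq_zero.mp h_ne_zero),
        -map_add]
    rw [finale]
    exact Subtype.mem (-p.coeff 0 / p.coeff 1)
  have h_sep : h.Separable := separable_gcd_right _ (.map hβsep)
  have h_root : h.eval β = 0 := by
    apply eval_gcd_eq_zero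
    · rw [eval_comp, eval_sub, eval_mul, eval_C, eval_C, eval_X, eval_map, ← aeval_def, ←
        Algebra.smul_def, add_sub_cancel_right, minpoly.aeval]
    · rw [eval_map, ← aeval_def, minpoly.aeval]
  have h_splits : Splits (h.map ιEE') := by
    rw [← Polynomial.gcd_map]
    exact (SplittingField.splits _).of_dvd (map_ne_zero map_g_ne_zero)
      (EuclideanDomain.gcd_dvd_right _ _)
  have h_roots : ∀ x ∈ (h.map ιEE').roots, x = ιEE' β := by
    intro x hx
    rw [mem_roots_map h_ne_zero] at hx
    specialize hc (ιEE' γ - ιEE' (ιFE c) * x) (by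
      have f_root := root_left_of_root_gcd hx
      rw [eval₂_comp, eval₂_sub, eval₂_mul, eval₂_C, eval₂_C, eval₂_X, eval₂_map] at f_root
      exact (mem_roots_map (minpoly.ne_zero hα)).mpr f_root)
    specialize hc x (by
      rw [mem_roots_map (minpoly.ne_zero hβ), ← eval₂_map]
      exact root_right_of_root_gcd hx)
    by_contra a
    apply hc
    apply (div_eq_iff (sub_ne_zero.mpr a)).mpr
    simp only [γ, Algebra.smul_def, RingHom.map_add, RingHom.map_mul, RingHom.comp_apply]
    ring
  rw [← eq_X_sub_C_of_separable_of_root_eq h_sep h_root h_splits h_roots]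
  trans EuclideanDomain.gcd (?_ : E[X]) (?_ : E[X])
  · dsimp only [γ]
    convert (gcd_map (algebraMap F⟮γ⟯ E)).symm
  · simp only [map_comp, Polynomial.map_map, ← IsScalarTower.algebraMap_eq, Polynomial.map_sub,
      map_C, AdjoinSimple.algebraMap_gen, map_add, Polynomial.map_mul, map_X]
    congr

/-- Mixed primitive element theorem: `F⟮α, β⟯` is simple when `α` is integral and `β` is
separable over `F`. -/
theorem my_pe_pair {F : Type*} [Field F] {E : Type*} [Field E] [Algebra F E]
    (α β : E) (hα : IsIntegral F α) (hβsep : IsSeparable F β) : ∃ γ : E, F⟮α, β⟯ = F⟮γ⟯ := by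
  cases finite_or_infinite F with
  | inr inst => exact my_pe_inf_aux α β hα hβsep
  | inl inst =>
    haveI : FiniteDimensional F F⟮α, β⟯ := by
      apply IntermediateField.finiteDimensional_adjoin
      rintro x (rfl | rfl)
      exacts [hα, hβsep.isIntegral]
    haveI : Finite F⟮α, β⟯ := Module.finite_of_finite F
    obtain ⟨δ, hδ⟩ := Field.exists_primitive_element_of_finite_top F F⟮α, β⟯
    refine ⟨δ, le_antisymm ?_ (adjoin_simple_le_iff.2 δ.2)⟩
    intro x hx
    have : (⟨x, hx⟩ : F⟮α, β⟯) ∈ (⊤ : IntermediateField F F⟮α, β⟯) := trivial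
    rw [← hδ] at this
    have hmm : x ∈ F⟮δ⟯.map F⟮α, β⟯.val := ⟨⟨x, hx⟩, this, rfl⟩
    rwa [IntermediateField.adjoin_map, Set.image_singleton] at hmm

set_option maxHeartbeats 1000000 in
theorem minpoly_degree_le_fieldDeg_mul' (K L M : Type*) [Field K] [Field L] [Field M]
    [Algebra K L] [Algebra L M] [Algebra K M] [IsScalarTower K L M]
    [Algebra.IsAlgebraic K L] [Algebra.IsAlgebraic L M]
    (hbdd : BddAbove (Set.range fun β : L => (minpoly K β).natDegree))
    (α : M) :
    (minpoly K α).natDegree ≤ (⨆ α : L, (minpoly K α).natDegree) * (minpoly L α).natDegree := by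
  classical
  set D := ⨆ β : L, (minpoly K β).natDegree with hD
  have hdeg : ∀ β : L, (minpoly K β).natDegree ≤ D := fun β => le_ciSup hbdd β
  have hintK : ∀ x : L, IsIntegral K x := fun x => (Algebra.IsAlgebraic.isAlgebraic x).isIntegral
  -- Step A : a primitive element for the separable closure
  set S := separableClosure K L with hS
  obtain ⟨γ, hγsep, hγ⟩ : ∃ γ : L, IsSeparable K γ ∧ K⟮γ⟯ = S := by
    have hbd : BddAbove (Set.range fun x : S => (minpoly K (x : L)).natDegree) := by
      refine ⟨D, ?_⟩
      rintro - ⟨x, rfl⟩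
      exact hdeg _
    have hne : (Set.range fun x : S => (minpoly K (x : L)).natDegree).Nonempty :=
      Set.range_nonempty _
    obtain ⟨γ₀, hγ₀⟩ := Nat.sSup_mem hne hbd
    set m := sSup (Set.range fun x : S => (minpoly K (x : L)).natDegree) with hm
    have hle : ∀ x : S, (minpoly K (x : L)).natDegree ≤ m :=
      fun x => le_csSup hbd ⟨x, rfl⟩
    refine ⟨γ₀, mem_separableClosure_iff.1 γ₀.2, le_antisymm
      (adjoin_le_iff.2 (by rintro x rfl; exact γ₀.2)) ?_⟩
    intro β hβ
    obtain ⟨θ, hθ⟩ := my_pe_pair β (γ₀ : L) (hintK β) (mem_separableClosure_iff.1 γ₀.2)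
    have hsub : K⟮β, (γ₀ : L)⟯ ≤ S := adjoin_le_iff.2 (by rintro x (rfl | rfl); exacts [hβ, γ₀.2])
    have hθS : θ ∈ S := hsub (hθ ▸ mem_adjoin_simple_self K θ)
    have hγle : K⟮(γ₀ : L)⟯ ≤ K⟮θ⟯ := by
      rw [← hθ]
      exact adjoin_simple_le_iff.2 (subset_adjoin K _ (Set.mem_insert_of_mem β rfl))
    haveI : FiniteDimensional K K⟮θ⟯ := adjoin.finiteDimensional (hintK θ)
    have heq : K⟮(γ₀ : L)⟯ = K⟮θ⟯ := by
      apply IntermediateField.eq_of_le_of_finrank_le hγle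
      rw [adjoin.finrank (hintK θ), adjoin.finrank (hintK γ₀)]
      exact le_trans (hle ⟨θ, hθS⟩) (le_of_eq hγ₀.symm)
    rw [heq, ← hθ]
    exact subset_adjoin K _ (Set.mem_insert β _)
  haveI : FiniteDimensional K S := hγ ▸ adjoin.finiteDimensional (hintK γ)
  -- the key inequality
  have key : ∀ c : L, finrank K S * finrank S (S⟮c⟯ : IntermediateField S L) ≤ D := by
    intro c
    rw [← hγ]
    obtain ⟨θ, hθ⟩ := my_pe_pair c γ (hintK c) hγsep
    haveI : FiniteDimensional (K⟮γ⟯) (K⟮γ⟯⟮c⟯ : IntermediateField K⟮γ⟯ L) :=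
      adjoin.finiteDimensional ((hintK c).tower_top)
    have h1 : finrank K K⟮γ⟯ * finrank K⟮γ⟯ (K⟮γ⟯⟮c⟯ : IntermediateField K⟮γ⟯ L)
        = finrank K ((K⟮γ⟯⟮c⟯ : IntermediateField K⟮γ⟯ L).restrictScalars K) :=
      set_option synthInstance.maxHeartbeats 400000 in
      Module.finrank_mul_finrank (A := (K⟮γ⟯⟮c⟯ : IntermediateField K⟮γ⟯ L)) K K⟮γ⟯
    have hpair : K⟮γ, c⟯ = K⟮c, γ⟯ := by
      rw [show (insert γ {c} : Set L) = insert c {γ} from Set.pair_comm γ c]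
    rw [h1, adjoin_simple_adjoin_simple, hpair, hθ, adjoin.finrank (hintK θ)]
    exact hdeg θ
  -- exponent bookkeeping
  set q := ringExpChar K with hq
  haveI hqK : ExpChar K q := ringExpChar.expChar K
  haveI : ExpChar L q := expChar_of_injective_algebraMap (algebraMap K L).injective q
  haveI : ExpChar M q := expChar_of_injective_algebraMap (algebraMap K M).injective q
  haveI : ExpChar S q := expChar_of_injective_algebraMap (algebraMap K S).injective q
  have hE : ∀ c : L, ∃ e : ℕ, c ^ q ^ e ∈ S ∧ finrank K S * q ^ e ≤ D := by
    intro c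
    obtain ⟨m, y, hmin⟩ := IsPurelyInseparable.minpoly_eq_X_pow_sub_C S q c
    have hint : IsIntegral S c := (hintK c).tower_top
    have hdeg1 : (minpoly S c).natDegree = q ^ m := by rw [hmin, natDegree_X_pow_sub_C]
    refine ⟨m, ?_, ?_⟩
    · have := minpoly.aeval S c
      rw [hmin, map_sub, map_pow, aeval_X, aeval_C, sub_eq_zero] at this
      rw [this, IntermediateField.algebraMap_apply]
      exact y.2
    · have := key c
      rwa [adjoin.finrank hint, hdeg1] at this
  choose expo hexp1 hexp2 using hE
  -- the minimal polynomial of α over L and its coefficients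
  have hintL : IsIntegral L α := (Algebra.IsAlgebraic.isAlgebraic α).isIntegral
  set f := minpoly L α with hf
  set n := f.natDegree with hn
  set e := (Finset.range (n + 1)).sup fun i => expo (f.coeff i) with he
  have hco : ∀ i ∈ Finset.range (n + 1), f.coeff i ^ q ^ e ∈ S := by
    intro i hi
    have h1 : expo (f.coeff i) ≤ e := Finset.le_sup (f := fun i => expo (f.coeff i)) hi
    have : f.coeff i ^ q ^ e = (f.coeff i ^ q ^ expo (f.coeff i)) ^ q ^ (e - expo (f.coeff i)) := by
      rw [← pow_mul, ← pow_add, Nat.add_sub_cancel' h1]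
    rw [this]
    exact pow_mem (hexp1 _) _
  have hqe : finrank K S * q ^ e ≤ D := by
    obtain ⟨i, hi, hie⟩ := Finset.exists_mem_eq_sup (Finset.range (n + 1)) ⟨0, by simp⟩
      fun i => expo (f.coeff i)
    rw [he, hie]
    exact hexp2 _
  -- the polynomial over S annihilating α
  have hco' : ∀ i : ℕ, f.coeff i ^ q ^ e ∈ S := by
    intro i
    rcases lt_or_ge i (n + 1) with hi | hi
    · exact hco i (Finset.mem_range.2 hi)
    · rw [coeff_eq_zero_of_natDegree_lt (by omega), zero_pow (pow_ne_zero _ (expChar_pos K q).ne')]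
      exact zero_mem S
  set a : ℕ → S := fun i => ⟨f.coeff i ^ q ^ e, hco' i⟩ with ha
  set h : Polynomial S := ∑ i ∈ Finset.range (n + 1), C (a i) * X ^ i with hh
  have hn1 : 0 < n := minpoly.natDegree_pos hintL
  have hcoeffn : h.coeff n = 1 := by
    rw [hh, finset_sum_coeff]
    rw [Finset.sum_eq_single n]
    · rw [coeff_C_mul_X_pow, if_pos rfl]
      have : f.coeff n = 1 := (minpoly.monic hintL).coeff_natDegree
      ext
      simp [ha, this]
    · intro i _ hne
      rw [coeff_C_mul_X_pow, if_neg (fun hc => hne hc.symm)]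
    · intro hni
      exact absurd (Finset.mem_range.2 (by omega)) hni
  have hne0 : h ≠ 0 := fun h0 => by
    rw [h0, coeff_zero] at hcoeffn
    exact zero_ne_one hcoeffn
  have hdegh : h.natDegree ≤ n := by
    apply natDegree_sum_le_of_forall_le
    intro i hi
    exact le_trans (natDegree_C_mul_X_pow_le _ _) (Nat.lt_succ_iff.1 (Finset.mem_range.1 hi))
  set g := expand S (q ^ e) h with hg
  have hqe0 : 0 < q ^ e := expChar_pow_pos K q e
  have hgne : g ≠ 0 := fun h0 => hne0 ((expand_eq_zero hqe0).1 h0)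
  have hgroot : aeval α g = 0 := by
    rw [hg, expand_aeval]
    have h2 : aeval (α ^ q ^ e) h = iterateFrobenius M q e (aeval α f) := by
      rw [aeval_eq_sum_range (p := f) α, ← hn, map_sum (iterateFrobenius M q e), hh, map_sum]
      refine Finset.sum_congr rfl fun i _ => ?_
      rw [map_mul, aeval_C, aeval_X_pow, iterateFrobenius_def, Algebra.smul_def, mul_pow,
        ← map_pow, pow_right_comm]
      rw [IsScalarTower.algebraMap_apply S L M]
      simp [ha, IntermediateField.algebraMap_apply]
    rw [h2, minpoly.aeval, map_zero]
  have hminS : (minpoly S α).natDegree ≤ q ^ e * n := by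
    have h3 := minpoly.degree_le_of_ne_zero S α hgne hgroot
    have h4 := natDegree_le_natDegree h3
    apply le_trans h4
    rw [hg, natDegree_expand]
    calc h.natDegree * q ^ e ≤ n * q ^ e := Nat.mul_le_mul_right _ hdegh
      _ = q ^ e * n := Nat.mul_comm _ _
  -- final assembly
  haveI : Algebra.IsAlgebraic K M := Algebra.IsAlgebraic.trans K L M
  have hintS : IsIntegral S α := (Algebra.IsAlgebraic.isAlgebraic (R := K) α).isIntegral.tower_top
  haveI : FiniteDimensional S (S⟮α⟯ : IntermediateField S M) := adjoin.finiteDimensional hintS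
  set B := (S⟮α⟯ : IntermediateField S M) with hB
  haveI : FiniteDimensional K B := FiniteDimensional.trans K S B
  haveI : IsScalarTower K B M := IsScalarTower.of_algebraMap_eq fun x => by
    rw [IsScalarTower.algebraMap_apply K S M, IsScalarTower.algebraMap_apply S B M,
      IsScalarTower.algebraMap_apply K S B]
  have hminB : minpoly K α = minpoly K (AdjoinSimple.gen S α) := by
    rw [← minpoly.algebraMap_eq (algebraMap B M).injective, AdjoinSimple.algebraMap_gen]
  calc (minpoly K α).natDegree = (minpoly K (AdjoinSimple.gen S α)).natDegree := by rw [hminB]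
    _ ≤ finrank K B := minpoly.natDegree_le _
    _ = finrank K S * finrank S B := (Module.finrank_mul_finrank K S B).symm
    _ = finrank K S * (minpoly S α).natDegree := by rw [hB, adjoin.finrank hintS]
    _ ≤ finrank K S * (q ^ e * n) := Nat.mul_le_mul_left _ hminS
    _ = (finrank K S * q ^ e) * n := (Nat.mul_assoc _ _ _).symm
    _ ≤ D * n := Nat.mul_le_mul_right _ hqe


/-- For algebraic field extensions `K ⊆ L ⊆ M` with `d_K(L)` finite, every `α ∈ M`
satisfies `deg minpoly_K(α) ≤ d_K(L) · deg minpoly_L(α)`. -/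
theorem minpoly_degree_le_fieldDeg_mul (K L M : Type*) [Field K] [Field L] [Field M]
    [Algebra K L] [Algebra L M] [Algebra K M] [IsScalarTower K L M]
    [Algebra.IsAlgebraic K L] [Algebra.IsAlgebraic L M]
    (hbdd : BddAbove (Set.range fun β : L => (minpoly K β).natDegree))
    (α : M) :
    (minpoly K α).natDegree ≤ fieldDeg K L * (minpoly L α).natDegree :=
  minpoly_degree_le_fieldDeg_mul' K L M hbdd α
end

section
/- Let A ⊆ B be a module-finite extension of integral domains with fraction fields K ⊆ L. Then B is a free A-module if and only if [L : K] = μ_A(B), the minimal number of generators of B as an A-module. -/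
open Polynomial

/-- In a domain `B`, a nonzero element integral over `A` divides a nonzero
(image of an) element of `A`. -/
lemma exists_eq_mul_of_isIntegral {A B : Type*} [CommRing A] [CommRing B] [IsDomain B]
    [Algebra A B] {s : B} (hs : s ≠ 0) (hint : IsIntegral A s) :
    ∃ a : A, algebraMap A B a ≠ 0 ∧ ∃ c : B, algebraMap A B a = s * c := by
  obtain ⟨p, hp, heval⟩ := hint
  suffices H : ∀ n (p : A[X]), p.natDegree = n → p.Monic → aeval s p = 0 →
      ∃ a : A, algebraMap A B a ≠ 0 ∧ ∃ c : B, algebraMap A B a = s * c from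
    H p.natDegree p rfl hp heval
  intro n
  induction n using Nat.strong_induction_on with
  | _ n ih =>
    intro p hn hp heval
    have hkey : aeval s p.divX * s + algebraMap A B (p.coeff 0) = 0 := by
      have h := congrArg (aeval s) p.divX_mul_X_add
      simpa [heval] using h
    have hdeg : p.natDegree ≠ 0 := by
      intro h
      have h1 : p = 1 := hp.natDegree_eq_zero.mp h
      rw [h1] at heval
      simp at heval
    by_cases h0 : algebraMap A B (p.coeff 0) = 0
    · have h1 : aeval s p.divX * s = 0 := by rwa [h0, add_zero] at hkey
      have h2 : aeval s p.divX = 0 := by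
        rcases mul_eq_zero.mp h1 with h | h
        · exact h
        · exact absurd h hs
      have hmon : p.divX.Monic := by
        unfold Polynomial.Monic
        rw [Polynomial.leadingCoeff, natDegree_divX_eq_natDegree_tsub_one, coeff_divX,
          Nat.sub_add_cancel (Nat.one_le_iff_ne_zero.mpr hdeg)]
        exact hp
      exact ih p.divX.natDegree
        (by rw [natDegree_divX_eq_natDegree_tsub_one, hn]; omega) p.divX rfl hmon h2
    · refine ⟨p.coeff 0, h0, -aeval s p.divX, ?_⟩
      have h1 : algebraMap A B (p.coeff 0) = -(aeval s p.divX * s) :=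
        eq_neg_of_add_eq_zero_right hkey
      rw [h1]; ring

/-- A module-finite extension `A ⊆ B` of integral domains with fraction fields `K ⊆ L`
is free as an `A`-module iff `[L : K] = μ_A(B)`. -/
theorem free_iff_finrank_eq_mu (A B K L : Type*) [CommRing A] [IsDomain A]
    [CommRing B] [IsDomain B] [Algebra A B]
    (hinj : Function.Injective (algebraMap A B)) [Module.Finite A B]
    [Field K] [Algebra A K] [IsFractionRing A K]
    [Field L] [Algebra B L] [IsFractionRing B L]
    [Algebra K L] [Algebra A L] [IsScalarTower A K L] [IsScalarTower A B L] :
    Module.Free A B ↔ Module.finrank K L = mu A B := by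
  classical
  have hBL : Function.Injective (algebraMap B L) := IsFractionRing.injective B L
  have hAL : Function.Injective (algebraMap A L) := by
    rw [IsScalarTower.algebraMap_eq A B L]
    exact hBL.comp hinj
  -- `L` is the localization of `B` at (the image of) `A⁰`.
  haveI hloc : IsLocalization (Algebra.algebraMapSubmonoid B (nonZeroDivisors A)) L := by
    refine ⟨?_, ?_, ?_⟩
    · rintro ⟨_, a, ha, rfl⟩
      rw [SetLike.mem_coe, mem_nonZeroDivisors_iff_ne_zero] at ha
      rw [isUnit_iff_ne_zero, ← IsScalarTower.algebraMap_apply]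
      intro h
      exact ha (hAL (by rw [h, map_zero]))
    · intro z
      obtain ⟨⟨b, t⟩, ht⟩ := IsLocalization.surj (nonZeroDivisors B) z
      have hs0 : (t : B) ≠ 0 := nonZeroDivisors.ne_zero t.2
      have hint : IsIntegral A (t : B) := Algebra.IsIntegral.isIntegral _
      obtain ⟨a, ha, c, hc⟩ := exists_eq_mul_of_isIntegral hs0 hint
      refine ⟨⟨b * c, ⟨algebraMap A B a, a, ?_, rfl⟩⟩, ?_⟩
      · rw [SetLike.mem_coe, mem_nonZeroDivisors_iff_ne_zero]
        intro h
        exact ha (by rw [h, map_zero])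
      · simp only
        rw [hc, map_mul, map_mul, ← mul_assoc, ht]
    · intro x y h
      exact ⟨1, by rw [OneMemClass.coe_one, one_mul, one_mul]; exact hBL h⟩
  set f := (IsScalarTower.toAlgHom A B L).toLinearMap with hf
  haveI hlm : IsLocalizedModule (nonZeroDivisors A) f :=
    isLocalizedModule_iff_isLocalization.mpr hloc
  haveI : FiniteDimensional K L := Module.Finite.of_isLocalization A B (Rₚ := K) (Sₚ := L) (nonZeroDivisors A)
  have hfapp : ∀ x : B, f x = algebraMap B L x := fun x => rfl
  -- the minimum is attained
  have hmu_mem : mu A B ∈ {n | ∃ s : Finset B, s.card = n ∧ Submodule.span A (s : Set B) = ⊤} := by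
    apply Nat.sInf_mem
    obtain ⟨s, hs⟩ := Module.Finite.fg_top (R := A) (M := B)
    exact ⟨s.card, s, rfl, hs⟩
  obtain ⟨s, hcard, hspan⟩ := hmu_mem
  -- images of a spanning set span `L` over `K`
  have hspanL : Submodule.span K (f '' (s : Set B)) = ⊤ :=
    span_eq_top_of_isLocalizedModule K (nonZeroDivisors A) f hspan
  have himage : f '' (s : Set B) = ((s.image (algebraMap B L) : Finset L) : Set L) := by
    rw [Finset.coe_image]
    rfl
  -- `finrank K L ≤ mu A B` always
  have hle : Module.finrank K L ≤ mu A B := by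
    have h1 : Module.finrank K
        (Submodule.span K ((s.image (algebraMap B L) : Finset L) : Set L)) ≤
        (s.image (algebraMap B L)).card := finrank_span_finset_le_card _
    rw [← himage, hspanL, finrank_top] at h1
    exact h1.trans ((Finset.card_image_le).trans hcard.le)
  constructor
  · -- free → finrank = mu
    intro hfree
    set ι := Module.Free.ChooseBasisIndex A B
    set b : Module.Basis ι A B := Module.Free.chooseBasis A B
    have hbL : Module.Basis ι K L := b.ofIsLocalizedModule K (nonZeroDivisors A) f
    have h1 : Module.finrank K L = Fintype.card ι := Module.finrank_eq_card_basis hbL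
    have h2 : mu A B ≤ Fintype.card ι := by
      apply Nat.sInf_le
      refine ⟨Finset.univ.image b, ?_, ?_⟩
      · rw [Finset.card_image_of_injective _ b.injective, Finset.card_univ]
      · rw [Finset.coe_image, Finset.coe_univ, Set.image_univ, b.span_eq]
    omega
  · -- finrank = mu → free
    intro hn
    set v : {x // x ∈ s} → B := fun x => (x : B) with hv
    have hrange : Set.range (f ∘ v) = f '' (s : Set B) := by
      rw [Set.range_comp, hv, Subtype.range_coe_subtype, Finset.setOf_mem]
    have hliK : LinearIndependent K (f ∘ v) := by
      apply linearIndependent_of_top_le_span_of_card_eq_finrank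
      · rw [hrange, hspanL]
      · rw [Fintype.card_coe, hcard, hn]
    have hsmul_inj : Function.Injective fun r : A => r • (1 : K) := by
      intro x y h
      simp only [Algebra.smul_def, mul_one] at h
      exact IsFractionRing.injective A K h
    have hliA : LinearIndependent A (f ∘ v) := hliK.restrict_scalars hsmul_inj
    have hliB : LinearIndependent A v := hliA.of_comp f
    have hspanv : Submodule.span A (Set.range v) = ⊤ := by
      rw [hv, Subtype.range_coe_subtype, Finset.setOf_mem, hspan]
    exact Module.Free.of_basis (Module.Basis.mk hliB (by rw [hspanv]))
end

section
/- Let A be an integral domain, b integral over A with B = A[b] an integral domain, and suppose B is projective as an A-module. Then B is a free A-module with basis 1, b, ..., b^{n-1}, where n = id_A(b) is the minimal degree of a monic polynomial over A vanishing at b; moreover n equals the degree of the minimal polynomial of b over K = Frac(A). -/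
open Polynomial TensorProduct

section Aux

variable {A : Type*} [CommRing A]

/-- The polynomial with coefficients given by a `Fin n`-tuple. -/
private noncomputable def polyOf {n : ℕ} (g : Fin n → A) : A[X] :=
  ∑ i : Fin n, Polynomial.monomial (i : ℕ) (g i)

private lemma polyOf_coeff {n : ℕ} (g : Fin n → A) (i : Fin n) :
    (polyOf g).coeff (i : ℕ) = g i := by
  classical
  rw [polyOf, Polynomial.finset_sum_coeff, Finset.sum_eq_single i]
  · simp
  · intro j _ hj
    rw [Polynomial.coeff_monomial, if_neg (fun h => hj (Fin.ext h))]
  · simp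

private lemma polyOf_natDegree_lt {n : ℕ} (hn : 0 < n) (g : Fin n → A) :
    (polyOf g).natDegree < n := by
  have h : (polyOf g).natDegree ≤ n - 1 :=
    Polynomial.natDegree_sum_le_of_forall_le _ _
      (fun i _ => (Polynomial.natDegree_monomial_le _).trans (by omega))
  omega

private lemma polyOf_aeval {B : Type*} [CommRing B] [Algebra A B] {n : ℕ}
    (g : Fin n → A) (x : B) :
    Polynomial.aeval x (polyOf g) = ∑ i : Fin n, g i • x ^ (i : ℕ) := by
  rw [polyOf, map_sum]
  refine Finset.sum_congr rfl fun i _ => ?_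
  rw [Polynomial.aeval_monomial, Algebra.smul_def]

/-- If every nonzero polynomial vanishing at `b` has degree at least `n`, then
`1, b, …, b^(n-1)` are linearly independent. -/
private lemma linearIndependent_pow_of_min {B : Type*} [CommRing B] [Algebra A B]
    {b : B} {n : ℕ}
    (H : ∀ q : A[X], q ≠ 0 → Polynomial.aeval b q = 0 → n ≤ q.natDegree) :
    LinearIndependent A fun i : Fin n => b ^ (i : ℕ) := by
  rcases Nat.eq_zero_or_pos n with rfl | hn
  · exact linearIndependent_empty_type
  rw [Fintype.linearIndependent_iff]
  intro g hg
  have h0 : polyOf g = 0 := by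
    by_contra hq
    have h1 := H _ hq (by rw [polyOf_aeval]; exact hg)
    have h2 := polyOf_natDegree_lt hn g
    omega
  intro i
  rw [← polyOf_coeff g i, h0, Polynomial.coeff_zero]

/-- If `b` generates `B` as an `A`-algebra and kills a monic polynomial `p`, then the
powers `1, b, …, b^(deg p - 1)` span `B` as an `A`-module. -/
private lemma span_pow_of_monic {B : Type*} [CommRing B] [Algebra A B] [Nontrivial A] {b : B}
    (hgen : Algebra.adjoin A ({b} : Set B) = ⊤) {p : A[X]} (hp : p.Monic)
    (hp0 : Polynomial.aeval b p = 0) :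
    Submodule.span A (Set.range fun i : Fin p.natDegree => b ^ (i : ℕ)) = ⊤ := by
  rw [eq_top_iff]
  rintro x -
  have hx : x ∈ Algebra.adjoin A ({b} : Set B) := by rw [hgen]; trivial
  rw [Algebra.adjoin_singleton_eq_range_aeval] at hx
  obtain ⟨f, rfl⟩ := hx
  have key : (Polynomial.aeval b) f = (Polynomial.aeval b) (f %ₘ p) := by
    conv_lhs => rw [← Polynomial.modByMonic_add_div f p]
    simp [hp0]
  show (Polynomial.aeval b) f ∈ Submodule.span A (Set.range fun i : Fin p.natDegree => b ^ (i : ℕ))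
  rw [key]
  rcases eq_or_ne (f %ₘ p) 0 with h | h
  · rw [h, map_zero]; exact Submodule.zero_mem _
  have hlt : (f %ₘ p).natDegree < p.natDegree :=
    Polynomial.natDegree_lt_natDegree h (Polynomial.degree_modByMonic_lt f hp)
  rw [Polynomial.aeval_eq_sum_range' hlt]
  apply Submodule.sum_mem
  intro i hi
  exact Submodule.smul_mem _ _ (Submodule.subset_span ⟨⟨i, Finset.mem_range.mp hi⟩, rfl⟩)

/-- Base change preserves generation by a single element. -/
private lemma adjoin_tmul_top {B S : Type*} [CommRing B] [Algebra A B] [CommRing S]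
    [Algebra A S] {b : B} (hgen : Algebra.adjoin A ({b} : Set B) = ⊤) :
    Algebra.adjoin S ({(1 : S) ⊗ₜ[A] b} : Set (S ⊗[A] B)) = ⊤ := by
  rw [eq_top_iff]
  rintro x -
  induction x with
  | zero => exact zero_mem _
  | add x y hx hy => exact add_mem hx hy
  | tmul s y =>
    have hy : ((1 : S) ⊗ₜ[A] y) ∈ Algebra.adjoin S ({(1 : S) ⊗ₜ[A] b} : Set (S ⊗[A] B)) := by
      have hmem : y ∈ Algebra.adjoin A ({b} : Set B) := by rw [hgen]; trivial
      have h2 : ((1 : S) ⊗ₜ[A] y) ∈ (Algebra.adjoin A ({b} : Set B)).map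
          (Algebra.TensorProduct.includeRight (R := A) (A := S) (B := B)) :=
        ⟨y, hmem, rfl⟩
      rw [AlgHom.map_adjoin] at h2
      have h3 : Algebra.adjoin A
          (Algebra.TensorProduct.includeRight (R := A) (A := S) (B := B) '' {b}) ≤
          Subalgebra.restrictScalars A (Algebra.adjoin S {(1 : S) ⊗ₜ[A] b}) := by
        apply Algebra.adjoin_le
        rintro _ ⟨z, hz, rfl⟩
        rw [Set.mem_singleton_iff] at hz
        subst hz
        show ((1 : S) ⊗ₜ[A] z) ∈ Subalgebra.restrictScalars A (Algebra.adjoin S {(1 : S) ⊗ₜ[A] z})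
        rw [Subalgebra.mem_restrictScalars]
        exact Algebra.subset_adjoin rfl
      exact (Subalgebra.mem_restrictScalars A).mp (h3 h2)
    have heq : s ⊗ₜ[A] y = s • ((1 : S) ⊗ₜ[A] y) := by
      rw [TensorProduct.smul_tmul', smul_eq_mul, mul_one]
    rw [heq]
    exact Subalgebra.smul_mem _ hy s


set_option maxHeartbeats 1000000 in
/-- Over a local ring, a finite free algebra generated by one element `c` has the first
`finrank` powers of `c` as a basis. -/
private lemma local_power_basis {R C : Type*} [CommRing R] [IsLocalRing R] [CommRing C]
    [Algebra R C] [Module.Finite R C] [Module.Free R C] {c : C}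
    (hgen : Algebra.adjoin R ({c} : Set C) = ⊤) :
    Submodule.span R (Set.range fun i : Fin (Module.finrank R C) => c ^ (i : ℕ)) = ⊤ ∧
      LinearIndependent R fun i : Fin (Module.finrank R C) => c ^ (i : ℕ) := by
  classical
  set r := Module.finrank R C with hrdef
  let k := IsLocalRing.ResidueField R
  let D := k ⊗[R] C
  set c' : D := (1 : k) ⊗ₜ[R] c with hc'def
  have hc'gen : Algebra.adjoin k ({c'} : Set D) = ⊤ := adjoin_tmul_top hgen
  have hc'int : IsIntegral k c' := IsIntegral.of_finite k c'
  have hrD : Module.finrank k D = r := Module.finrank_baseChange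
  have hindk : LinearIndependent k fun i : Fin (minpoly k c').natDegree => c' ^ (i : ℕ) :=
    linearIndependent_pow c'
  have hsr : (minpoly k c').natDegree ≤ r := by
    have h1 : Fintype.card (Fin (minpoly k c').natDegree) ≤ Module.finrank k D :=
      hindk.fintype_card_le_finrank
    rwa [Fintype.card_fin, hrD] at h1
  have hDspan := span_pow_of_monic hc'gen (minpoly.monic hc'int) (minpoly.aeval k c')
  have hDspan' : Submodule.span k (Set.range fun i : Fin r => c' ^ (i : ℕ)) = ⊤ := by
    rw [eq_top_iff, ← hDspan]
    apply Submodule.span_le.mpr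
    rintro _ ⟨i, rfl⟩
    exact Submodule.subset_span ⟨⟨(i : ℕ), lt_of_lt_of_le i.2 hsr⟩, rfl⟩
  -- Nakayama
  have hsurjk : Function.Surjective (algebraMap R k) := by
    rw [IsLocalRing.ResidueField.algebraMap_eq]
    exact IsLocalRing.residue_surjective
  have hNtop : Submodule.span R (Set.range fun i : Fin r => c ^ (i : ℕ)) = ⊤ := by
    rw [← IsLocalRing.map_tensorProduct_mk_eq_top (R := R) (M := C), Submodule.map_span]
    have himg : TensorProduct.mk R k C 1 '' (Set.range fun i : Fin r => c ^ (i : ℕ))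
        = Set.range fun i : Fin r => c' ^ (i : ℕ) := by
      rw [← Set.range_comp]
      refine congrArg _ (funext fun i => ?_)
      show TensorProduct.mk R k C 1 (c ^ (i : ℕ)) = c' ^ (i : ℕ)
      rw [hc'def, TensorProduct.mk_apply, Algebra.TensorProduct.tmul_pow, one_pow]
    rw [himg, ← Submodule.restrictScalars_span R k hsurjk, hDspan']
    rfl
  -- Orzech
  set v : Fin r → C := fun i => c ^ (i : ℕ) with hvdef
  set φ : (Fin r → R) →ₗ[R] C := Fintype.linearCombination R v with hφdef
  have hφsurj : Function.Surjective φ := by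
    intro z
    have hz : z ∈ Submodule.span R (Set.range v) := by rw [hNtop]; trivial
    obtain ⟨g, hg⟩ := (Submodule.mem_span_range_iff_exists_fun R).mp hz
    exact ⟨g, by rw [hφdef, Fintype.linearCombination_apply]; exact hg⟩
  have hφinj : Function.Injective φ := by
    let e : C ≃ₗ[R] (Fin r → R) := (Module.finBasis R C).equivFun
    have hψ : Function.Surjective (e.toLinearMap ∘ₗ φ) := e.surjective.comp hφsurj
    have hi := OrzechProperty.injective_of_surjective_endomorphism _ hψ
    intro x y hxy
    exact hi (by simp only [LinearMap.comp_apply, LinearEquiv.coe_coe, hxy])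
  refine ⟨hNtop, ?_⟩
  rw [Fintype.linearIndependent_iff]
  intro g hg
  have h0 : φ g = 0 := by rw [hφdef, Fintype.linearCombination_apply]; exact hg
  have hz := hφinj (h0.trans (map_zero φ).symm)
  exact fun i => congrFun hz i

end Aux

set_option maxHeartbeats 4000000 in
set_option synthInstance.maxHeartbeats 1000000 in
/-- Let `A ⊆ B = A[b]` be a simple integral extension of integral domains with `B`
projective as an `A`-module, and let `K ⊆ L` be the induced extension of fraction
fields. Then `B` is free over `A` with basis `1, b, …, b^(n-1)` where `n = id_A(b)`,
and `n` equals the degree of the minimal polynomial of `b` over `K`. -/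
theorem projective_simple_is_free (A B K L : Type*) [CommRing A] [IsDomain A]
    [CommRing B] [IsDomain B] [Algebra A B]
    (hinj : Function.Injective (algebraMap A B))
    (b : B) (hb : IsIntegral A b) (hgen : Algebra.adjoin A ({b} : Set B) = ⊤)
    [Module.Projective A B]
    [Field K] [Algebra A K] [IsFractionRing A K]
    [Field L] [Algebra B L] [IsFractionRing B L]
    [Algebra K L] [Algebra A L] [IsScalarTower A K L] [IsScalarTower A B L] :
    (∃ bas : Module.Basis (Fin (intDeg A b)) A B, ∀ i, bas i = b ^ (i : ℕ)) ∧
      intDeg A b = (minpoly K (algebraMap B L b)).natDegree := by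
  classical
  set β : L := algebraMap B L b with hβdef
  have hBL : Function.Injective (algebraMap B L) := IsFractionRing.injective B L
  have hAK : Function.Injective (algebraMap A K) := IsFractionRing.injective A K
  have hβint : IsIntegral K β :=
    IsIntegral.tower_top (hb.map (IsScalarTower.toAlgHom A B L))
  set m : ℕ := (minpoly K β).natDegree with hmdef
  -- torsion-freeness of B over A
  have htf : ∀ (a : A) (x : B), a ≠ 0 → a • x = 0 → x = 0 := by
    intro a x ha h
    rw [Algebra.smul_def] at h
    rcases mul_eq_zero.mp h with h | h
    · exact absurd (hinj (h.trans (map_zero (algebraMap A B)).symm)) ha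
    · exact h
  -- every nonzero polynomial over A vanishing at b has degree at least m
  have L2 : ∀ q : A[X], q ≠ 0 → Polynomial.aeval b q = 0 → m ≤ q.natDegree := by
    intro q hq h0
    have hmap : Polynomial.aeval β (q.map (algebraMap A K)) = 0 := by
      rw [Polynomial.aeval_map_algebraMap]
      show Polynomial.aeval ((IsScalarTower.toAlgHom A B L) b) q = 0
      rw [Polynomial.aeval_algHom_apply, h0, map_zero]
    have hmapne : q.map (algebraMap A K) ≠ 0 := fun hc =>
      hq (Polynomial.map_injective _ hAK (by rw [hc, Polynomial.map_zero]))
    have hdeg := minpoly.degree_le_of_ne_zero K β hmapne hmap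
    have h1 := Polynomial.natDegree_le_natDegree hdeg
    rwa [Polynomial.natDegree_map_eq_of_injective hAK] at h1
  -- there exists a nonzero polynomial over A of degree exactly m vanishing at b
  have exist_gm : ∃ g : A[X], g.natDegree = m ∧ g ≠ 0 ∧ Polynomial.aeval b g = 0 := by
    obtain ⟨cden, hcden⟩ :=
      IsLocalization.integerNormalization_map_to_map (nonZeroDivisors A) (minpoly K β)
    set g := IsLocalization.integerNormalization (nonZeroDivisors A) (minpoly K β) with hgdef
    have hcne : algebraMap A K (cden : A) ≠ 0 := fun hc =>
      nonZeroDivisors.ne_zero cden.2 (hAK (by rw [hc, map_zero]))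
    have hsmul : ((cden : A) • minpoly K β) = Polynomial.C (algebraMap A K (cden : A)) *
        minpoly K β := by
      rw [← Polynomial.smul_eq_C_mul, algebraMap_smul]
    have hmapne : (cden : A) • minpoly K β ≠ 0 := by
      rw [hsmul]
      exact mul_ne_zero (fun hc => hcne (by
        simpa using congrArg (fun q => Polynomial.coeff q 0) hc)) (minpoly.ne_zero hβint)
    refine ⟨g, ?_, ?_, ?_⟩
    · have h1 : (g.map (algebraMap A K)).natDegree = g.natDegree :=
        Polynomial.natDegree_map_eq_of_injective hAK g
      rw [hcden, hsmul, Polynomial.natDegree_C_mul hcne] at h1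
      exact h1.symm
    · intro h
      exact hmapne (by rw [← hcden, h, Polynomial.map_zero])
    · have h1 : Polynomial.aeval β g = 0 :=
        IsLocalization.integerNormalization_aeval_eq_zero (nonZeroDivisors A)
          (minpoly K β) (minpoly.aeval K β)
      have h2 : Polynomial.aeval ((IsScalarTower.toAlgHom A B L) b) g =
          (IsScalarTower.toAlgHom A B L) (Polynomial.aeval b g) :=
        Polynomial.aeval_algHom_apply _ _ _
      rw [show Polynomial.aeval β g = Polynomial.aeval ((IsScalarTower.toAlgHom A B L) b) g
        from rfl, h2] at h1
      exact hBL (h1.trans (map_zero (algebraMap B L)).symm)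
  -- the ideal of "leading coefficients in degree m"
  let J : Ideal A :=
    { carrier := {a | ∃ p : A[X], Polynomial.aeval b p = 0 ∧ p.natDegree ≤ m ∧ p.coeff m = a}
      add_mem' := by
        rintro x y ⟨p, hp0, hpd, hpc⟩ ⟨q, hq0, hqd, hqc⟩
        exact ⟨p + q, by rw [map_add, hp0, hq0, add_zero],
          (Polynomial.natDegree_add_le p q).trans (max_le hpd hqd),
          by rw [Polynomial.coeff_add, hpc, hqc]⟩
      zero_mem' := ⟨0, by simp, by simp, by simp⟩
      smul_mem' := by
        rintro c x ⟨p, hp0, hpd, hpc⟩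
        exact ⟨c • p, by rw [map_smul, hp0, smul_zero],
          (Polynomial.natDegree_smul_le c p).trans hpd,
          by rw [Polynomial.coeff_smul, hpc, smul_eq_mul]⟩ }
  haveI hBfin : Module.Finite A B :=
    ⟨by rw [← Algebra.top_toSubmodule, ← hgen]; exact hb.fg_adjoin_singleton⟩
  haveI hBfp : Module.FinitePresentation A B := Module.finitePresentation_of_projective A B
  -- J is the unit ideal
  have hJtop : J = ⊤ := by
    by_contra hJ
    obtain ⟨𝔪, hmax, hJm⟩ := Ideal.exists_le_maximal J hJ
    haveI := hmax.isPrime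
    let R := Localization.AtPrime 𝔪
    let C := R ⊗[A] B
    set f : B →ₗ[A] C := TensorProduct.mk A R B 1 with hfdef
    haveI hloc : IsLocalizedModule 𝔪.primeCompl f :=
      (isLocalizedModule_iff_isBaseChange 𝔪.primeCompl R f).mpr
        (TensorProduct.isBaseChange A B R)
    haveI : Module.Free R C := Module.free_of_flat_of_isLocalRing
    set b' : C := (1 : R) ⊗ₜ[A] b with hb'def
    have hb'gen : Algebra.adjoin R ({b'} : Set C) = ⊤ := adjoin_tmul_top hgen
    set r : ℕ := Module.finrank R C with hrdef
    have hAR : Function.Injective (algebraMap A R) :=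
      IsLocalization.injective R 𝔪.primeCompl_le_nonZeroDivisors
    have hfpow : ∀ j : ℕ, f (b ^ j) = b' ^ j := by
      intro j
      rw [hfdef, hb'def, TensorProduct.mk_apply, Algebra.TensorProduct.tmul_pow, one_pow]
    obtain ⟨hNtop, hindR⟩ := local_power_basis hb'gen
    rw [← hrdef] at hNtop hindR
    -- r ≤ m
    obtain ⟨gm, hgmd, hgmne, hgm0⟩ := exist_gm
    have hrm : r ≤ m := by
      by_contra hcon
      push_neg at hcon
      have hsum0 : ∑ i : Fin r, algebraMap A R (gm.coeff (i : ℕ)) • b' ^ (i : ℕ) = 0 := by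
        have h1 : Polynomial.aeval b gm = ∑ i ∈ Finset.range r, gm.coeff i • b ^ i :=
          Polynomial.aeval_eq_sum_range' (by omega) b
        have h2 : f (Polynomial.aeval b gm) = 0 := by rw [hgm0, map_zero]
        rw [h1, map_sum] at h2
        rw [Fin.sum_univ_eq_sum_range (fun i => algebraMap A R (gm.coeff i) • b' ^ i) r, ← h2]
        refine Finset.sum_congr rfl fun i _ => ?_
        rw [map_smul, hfpow, algebraMap_smul]
      have hall := Fintype.linearIndependent_iff.mp hindR _ hsum0
      have hm0 : algebraMap A R (gm.coeff m) = 0 := hall ⟨m, hcon⟩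
      have hc0 : gm.coeff m = 0 := hAR (by rw [hm0, map_zero])
      rw [← hgmd] at hc0
      exact Polynomial.leadingCoeff_ne_zero.mpr hgmne hc0
    -- pull back the relation b'^r ∈ span of lower powers
    have hmem : b' ^ r ∈ Submodule.span R (Set.range fun i : Fin r => b' ^ (i : ℕ)) := by
      rw [hNtop]; trivial
    obtain ⟨c, hc⟩ := (Submodule.mem_span_range_iff_exists_fun R).mp hmem
    obtain ⟨t, ht⟩ := IsLocalization.exist_integer_multiples 𝔪.primeCompl Finset.univ c
    choose a ha using fun i : Fin r => ht i (Finset.mem_univ i)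
    have htne : (t : A) ≠ 0 := fun h => t.2 (by rw [h]; exact 𝔪.zero_mem)
    set x : B := (t : A) • b ^ r - ∑ i : Fin r, a i • b ^ (i : ℕ) with hxdef
    have hfx : f x = 0 := by
      rw [hxdef, map_sub, map_smul, map_sum, hfpow]
      have hsum : ∑ i : Fin r, f (a i • b ^ (i : ℕ)) =
          (t : A) • ∑ i : Fin r, c i • b' ^ (i : ℕ) := by
        rw [Finset.smul_sum]
        refine Finset.sum_congr rfl fun i _ => ?_
        rw [map_smul, hfpow, ← algebraMap_smul R (a i) (b' ^ (i : ℕ)), ha i, smul_assoc]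
      rw [hsum, hc, sub_self]
    obtain ⟨u, hu⟩ := (IsLocalizedModule.eq_zero_iff 𝔪.primeCompl f).mp hfx
    have hune : (u : A) ≠ 0 := fun h => u.2 (by rw [h]; exact 𝔪.zero_mem)
    have hx0 : x = 0 := htf (u : A) x hune hu
    -- the corresponding polynomial
    set g2 : A[X] := (t : A) • X ^ r - ∑ i : Fin r, Polynomial.monomial (i : ℕ) (a i)
      with hg2def
    have hg2eval : Polynomial.aeval b g2 = 0 := by
      rw [hg2def, map_sub, map_smul, map_sum, Polynomial.aeval_X_pow]
      have : ∑ i : Fin r, Polynomial.aeval b (Polynomial.monomial (i : ℕ) (a i)) =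
          ∑ i : Fin r, a i • b ^ (i : ℕ) := by
        refine Finset.sum_congr rfl fun i _ => ?_
        rw [Polynomial.aeval_monomial, Algebra.smul_def]
      rw [this, ← hxdef, hx0]
    have hg2coeff : g2.coeff r = (t : A) := by
      rw [hg2def, Polynomial.coeff_sub, Polynomial.coeff_smul, Polynomial.coeff_X_pow,
        Polynomial.finset_sum_coeff]
      have hz : ∑ i : Fin r, (Polynomial.monomial (i : ℕ) (a i)).coeff r = 0 := by
        refine Finset.sum_eq_zero fun i _ => ?_
        rw [Polynomial.coeff_monomial, if_neg (by omega)]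
      rw [hz, if_pos rfl, smul_eq_mul, mul_one, sub_zero]
    have hg2ne : g2 ≠ 0 := fun h => htne (by rw [← hg2coeff, h, Polynomial.coeff_zero])
    have hg2degle : g2.natDegree ≤ r := by
      refine (Polynomial.natDegree_sub_le _ _).trans (max_le ?_ ?_)
      · exact (Polynomial.natDegree_smul_le _ _).trans (Polynomial.natDegree_X_pow_le r)
      · exact Polynomial.natDegree_sum_le_of_forall_le _ _
          (fun i _ => (Polynomial.natDegree_monomial_le _).trans i.2.le)
    have hmr : m ≤ r := (L2 g2 hg2ne hg2eval).trans hg2degle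
    have hrm' : r = m := le_antisymm hrm hmr
    have htJ : (t : A) ∈ J := ⟨g2, hg2eval, hrm' ▸ hg2degle, hrm' ▸ hg2coeff⟩
    exact t.2 (hJm htJ)
  -- extract a monic polynomial of degree m
  have h1J : (1 : A) ∈ J := by rw [hJtop]; trivial
  obtain ⟨p, hp0, hpd, hpc⟩ := h1J
  have hpne : p ≠ 0 := fun h => by
    rw [h, Polynomial.coeff_zero] at hpc
    exact one_ne_zero hpc.symm
  have hpdeg : p.natDegree = m := le_antisymm hpd (L2 p hpne hp0)
  have hpmonic : p.Monic := by
    rw [Polynomial.Monic, Polynomial.leadingCoeff, hpdeg]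
    exact hpc
  -- intDeg A b = m
  have hmmem : m ∈ {n | ∃ q : A[X], q.Monic ∧ q.natDegree = n ∧ Polynomial.aeval b q = 0} :=
    ⟨p, hpmonic, hpdeg, hp0⟩
  have hint : intDeg A b = m := by
    unfold intDeg
    refine le_antisymm (Nat.sInf_le hmmem) ?_
    obtain ⟨q, hqm, hqd, hq0⟩ := Nat.sInf_mem (⟨m, hmmem⟩ : Set.Nonempty
      {n | ∃ q : A[X], q.Monic ∧ q.natDegree = n ∧ Polynomial.aeval b q = 0})
    exact hqd ▸ L2 q hqm.ne_zero hq0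
  -- assemble
  have hindep : LinearIndependent A fun i : Fin m => b ^ (i : ℕ) :=
    linearIndependent_pow_of_min L2
  have hspan : Submodule.span A (Set.range fun i : Fin m => b ^ (i : ℕ)) = ⊤ := by
    rw [eq_top_iff, ← span_pow_of_monic hgen hpmonic hp0]
    apply Submodule.span_le.mpr
    rintro _ ⟨i, rfl⟩
    exact Submodule.subset_span ⟨⟨(i : ℕ), hpdeg ▸ i.2⟩, rfl⟩
  rw [hint]
  exact ⟨⟨Module.Basis.mk hindep hspan.ge, fun i => Module.Basis.mk_apply _ _ i⟩, rfl⟩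
end
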